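/- For every n ≥ 1 and every ordinal α > 1, the function β ↦ ⟨α,β⟩_n is strictly increasing on the ordinals: for all ordinals β < γ, ⟨α,β⟩_n < ⟨α,γ⟩_n. -/

import Mathlib

/-!
Fix `α > 1`, write `f = ⟨α, -⟩ₙ` and let `g = ⟨-, -⟩ₙ₋₁`, which by induction on `n` is strictly
increasing in its right argument and satisfies `x < g x y` for `x, y > 1` (as `g x 1 = x`).
Then `f β < f γ` for `β < γ` by induction on `γ`. If `γ` is additive principal, then
`β + 1 < γ`, so `f β < f (β + 1) ≤ sup_{δ < γ} f δ = f γ`. Otherwise `f γ = g (f γ_H) (f γ_T)`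
with `f γ_H, f γ_T > 1`: if `β ≤ γ_H` then `f β ≤ f γ_H < f γ`; if `β > γ_H` then `β` shares
the head `γ_H` and has a smaller tail, so monotonicity of `g` in its right argument concludes.
-/

open Ordinal

/-- The head of the Cantor Normal Form of `β` (for `β ≠ 0`): `ω ^ β₁`. -/
noncomputable def cnfHead (β : Ordinal) : Ordinal := ω ^ Ordinal.log ω β

/-- The tail of the Cantor Normal Form of `β`: `ω ^ β₂ + ⋯ + ω ^ β_k`. -/
noncomputable def cnfTail (β : Ordinal) : Ordinal := β - cnfHead β

theorem cnfHead_le {β : Ordinal} (hβ : β ≠ 0) : cnfHead β ≤ β :=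
  Ordinal.opow_log_le_self ω hβ

theorem cnfTail_lt {β : Ordinal} (hβ : β ≠ 0) : cnfTail β < β := by
  refine (Ordinal.sub_le_self β _).lt_of_ne fun h => ?_
  have h1 : cnfHead β + β = β := by
    have h2 := Ordinal.add_sub_cancel_of_le (cnfHead_le hβ)
    rwa [show β - cnfHead β = β from h] at h2
  have h2 : cnfHead β * ω ≤ β := Ordinal.add_eq_right_iff_mul_omega0_le.1 h1
  have h3 : β < ω ^ Order.succ (Ordinal.log ω β) :=
    Ordinal.lt_opow_succ_log_self Ordinal.one_lt_omega0 β
  rw [Ordinal.opow_succ] at h3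
  exact lt_irrefl β (h3.trans_le h2)

/-- Auxiliary step: given the previous operation `prev = ⟨-,-⟩_{n-1}` and the value `z`
at `β = 0`, produce `⟨α, -⟩_n` by transfinite recursion via the CNF of `β`. -/
noncomputable def ordOpAux (prev : Ordinal → Ordinal → Ordinal) (z : Ordinal)
    (α : Ordinal) : Ordinal → Ordinal :=
  WellFounded.fix Ordinal.lt_wf fun β IH =>
    if hβ0 : β = 0 then z                      -- k = 0
    else if β = 1 then α                       -- k = 1, β = 1
    else if hp : cnfHead β = β then            -- k = 1, β > 1 (additive principal limit)
      ⨆ γ : Set.Iio β, IH γ.1 γ.2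
    else                                       -- k ≥ 2
      prev (IH (cnfHead β) ((cnfHead_le hβ0).lt_of_ne hp))
           (IH (cnfTail β) (cnfTail_lt hβ0))

/-- The ordinal operations `⟨α, β⟩ₙ` of the paper (`n ≥ 1`; the value at `n = 0` is junk). -/
noncomputable def ordOp : ℕ → Ordinal → Ordinal → Ordinal
  | 0 => fun _ _ => 0
  | 1 => fun α β => α + β
  | 2 => fun α => ordOpAux (ordOp 1) 0 α
  | (n + 3) => fun α => ordOpAux (ordOp (n + 2)) 1 α

open Set

theorem cnfHead_pos (β : Ordinal) : 0 < cnfHead β :=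
  opow_pos _ omega0_pos

theorem cnfHead_one : cnfHead 1 = 1 := by
  rw [cnfHead, log_one_right, opow_zero]

theorem cnfHead_add_cnfTail {β : Ordinal} (hβ : β ≠ 0) : cnfHead β + cnfTail β = β :=
  Ordinal.add_sub_cancel_of_le (cnfHead_le hβ)

theorem cnfTail_ne_zero {β : Ordinal} (hβ : β ≠ 0) (h : cnfHead β ≠ β) : cnfTail β ≠ 0 :=
  fun h0 => h <| (cnfHead_le hβ).antisymm (Ordinal.sub_eq_zero_iff_le.1 h0)

theorem isPrincipal_add_of_cnfHead_eq {γ : Ordinal} (h : cnfHead γ = γ) :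
    IsPrincipal (· + ·) γ :=
  h ▸ isPrincipal_add_omega0_opow _

theorem cnfHead_eq_of_cnfHead_le {β γ : Ordinal} (hγβ : cnfHead γ ≤ β) (hβγ : β ≤ γ) :
    cnfHead β = cnfHead γ := by
  rw [cnfHead, cnfHead, (log_mono_right ω hβγ).antisymm (le_log_of_opow_le one_lt_omega0 hγβ)]

theorem cnfTail_lt_cnfTail {β γ : Ordinal} (hγβ : cnfHead γ ≤ β) (hβγ : β < γ) :
    cnfTail β < cnfTail γ := by
  have hβ : β ≠ 0 := (cnfHead_pos γ |>.trans_le hγβ).ne'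
  have hhead := cnfHead_eq_of_cnfHead_le hγβ hβγ.le
  rw [← cnfHead_add_cnfTail hβ, ← cnfHead_add_cnfTail hβγ.ne_bot, hhead] at hβγ
  exact (add_lt_add_iff_left _).1 hβγ

theorem ordOpAux_eq (prev : Ordinal → Ordinal → Ordinal) (z α β : Ordinal) :
    ordOpAux prev z α β =
      if β = 0 then z
      else if β = 1 then α
      else if cnfHead β = β then ⨆ γ : Iio β, ordOpAux prev z α γ
      else prev (ordOpAux prev z α (cnfHead β)) (ordOpAux prev z α (cnfTail β)) := by
  rw [ordOpAux, WellFounded.fix_eq]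
  split <;> rfl

universe u

section ordOpAux

variable {prev : Ordinal.{u} → Ordinal.{u} → Ordinal.{u}} {z α β γ : Ordinal.{u}}

@[simp]
theorem ordOpAux_zero : ordOpAux prev z α 0 = z := by
  simp [ordOpAux_eq]

@[simp]
theorem ordOpAux_one : ordOpAux prev z α 1 = α := by
  simp [ordOpAux_eq]

theorem ordOpAux_of_cnfHead_eq (hβ : β ≠ 1) (h : cnfHead β = β) :
    ordOpAux prev z α β = ⨆ γ : Iio β, ordOpAux prev z α γ := by
  rw [ordOpAux_eq, if_neg (h ▸ (cnfHead_pos β).ne'), if_neg hβ, if_pos h]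

theorem ordOpAux_of_cnfHead_ne (hβ : β ≠ 0) (h : cnfHead β ≠ β) :
    ordOpAux prev z α β =
      prev (ordOpAux prev z α (cnfHead β)) (ordOpAux prev z α (cnfTail β)) := by
  have hβ1 : β ≠ 1 := by rintro rfl; exact h cnfHead_one
  rw [ordOpAux_eq, if_neg hβ, if_neg hβ1, if_neg h]

theorem one_lt_ordOpAux (hα : 1 < α) (hmono : StrictMonoOn (ordOpAux prev z α) (Iio γ))
    (hβ : β ≠ 0) (hβγ : β < γ) : 1 < ordOpAux prev z α β := by
  obtain rfl | hβ1 := eq_or_ne β 1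
  · rwa [ordOpAux_one]
  · have h1β : 1 < β := lt_of_le_of_ne (Order.one_le_iff_ne_zero.2 hβ) hβ1.symm
    calc 1 < α := hα
      _ = ordOpAux prev z α 1 := ordOpAux_one.symm
      _ < ordOpAux prev z α β := hmono (h1β.trans hβγ) hβγ h1β

theorem ordOpAux_lt_of_cnfHead_eq (hmono : StrictMonoOn (ordOpAux prev z α) (Iio γ))
    (hγ : γ ≠ 1) (h : cnfHead γ = γ) (hβγ : β < γ) :
    ordOpAux prev z α β < ordOpAux prev z α γ := by
  have hβ1 : β + 1 < γ :=
    isPrincipal_add_of_cnfHead_eq h hβγ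
      (lt_of_le_of_ne (Order.one_le_iff_ne_zero.2 hβγ.ne_bot) hγ.symm)
  calc ordOpAux prev z α β < ordOpAux prev z α (β + 1) := hmono hβγ hβ1 (lt_add_one β)
    _ ≤ ⨆ δ : Iio γ, ordOpAux prev z α δ :=
      Ordinal.le_iSup (fun δ : Iio γ => ordOpAux prev z α δ) ⟨β + 1, hβ1⟩
    _ = ordOpAux prev z α γ := (ordOpAux_of_cnfHead_eq hγ h).symm

theorem ordOpAux_lt_of_cnfHead_ne (hα : 1 < α)
    (hgt : ∀ x y, 1 < x → 1 < y → x < prev x y) (hprev : ∀ x, 1 < x → StrictMono (prev x))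
    (hmono : StrictMonoOn (ordOpAux prev z α) (Iio γ))
    (hγ : γ ≠ 0) (h : cnfHead γ ≠ γ) (hβγ : β < γ) :
    ordOpAux prev z α β < ordOpAux prev z α γ := by
  have hH : cnfHead γ < γ := (cnfHead_le hγ).lt_of_ne h
  have hT : cnfTail γ < γ := cnfTail_lt hγ
  have hfH : 1 < ordOpAux prev z α (cnfHead γ) :=
    one_lt_ordOpAux hα hmono (cnfHead_pos γ).ne' hH
  have hfT : 1 < ordOpAux prev z α (cnfTail γ) :=
    one_lt_ordOpAux hα hmono (cnfTail_ne_zero hγ h) hT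
  rw [ordOpAux_of_cnfHead_ne hγ h]
  rcases le_or_gt β (cnfHead γ) with hβH | hHβ
  · exact (hmono.monotoneOn (hβH.trans_lt hH) hH hβH).trans_lt (hgt _ _ hfH hfT)
  · have hhead := cnfHead_eq_of_cnfHead_le hHβ.le hβγ.le
    have htail := cnfTail_lt_cnfTail hHβ.le hβγ
    rw [ordOpAux_of_cnfHead_ne ((cnfHead_pos γ).trans hHβ).ne' (hhead ▸ hHβ.ne), hhead]
    exact hprev _ hfH (hmono (htail.trans hT) hT htail)

theorem ordOpAux_strictMono (hz : z < α) (hα : 1 < α)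
    (hgt : ∀ x y, 1 < x → 1 < y → x < prev x y) (hprev : ∀ x, 1 < x → StrictMono (prev x)) :
    StrictMono (ordOpAux.{u, u} prev z α) := by
  intro β γ hβγ
  induction γ using WellFoundedLT.induction generalizing β with
  | ind γ ih =>
  have hmono : StrictMonoOn (ordOpAux prev z α) (Iio γ) := fun _ _ δ hδ hβδ => ih δ hδ hβδ
  obtain rfl | hγ1 := eq_or_ne γ 1
  · rwa [Order.lt_one_iff.1 hβγ, ordOpAux_zero, ordOpAux_one]
  obtain hh | hh := eq_or_ne (cnfHead γ) γ
  · exact ordOpAux_lt_of_cnfHead_eq hmono hγ1 hh hβγ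
  · exact ordOpAux_lt_of_cnfHead_ne hα hgt hprev hmono hβγ.ne_bot hh hβγ

end ordOpAux

theorem ordOp_add_two_eq (n : ℕ) (α : Ordinal) :
    ∃ z ≤ 1, ordOp (n + 2) α = ordOpAux (ordOp (n + 1)) z α := by
  cases n
  · exact ⟨0, zero_le_one, rfl⟩
  · exact ⟨1, le_rfl, rfl⟩

theorem ordOp_add_two_one (n : ℕ) (α : Ordinal) : ordOp (n + 2) α 1 = α := by
  obtain ⟨z, -, h⟩ := ordOp_add_two_eq n α
  rw [h, ordOpAux_one]

theorem lt_ordOp_add_one {n : ℕ} {x y : Ordinal.{u}}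
    (hmono : ∀ x : Ordinal.{u}, 1 < x → StrictMono (ordOp (n + 1) x)) (hx : 1 < x) (hy : 1 < y) :
    x < ordOp (n + 1) x y := by
  cases n with
  | zero => exact lt_add_of_pos_right x (zero_lt_one.trans hy)
  | succ n => simpa only [ordOp_add_two_one] using hmono x hx hy

theorem ordOp_add_one_strictMono (n : ℕ) {α : Ordinal} (hα : 1 < α) :
    StrictMono (ordOp (n + 1) α) := by
  induction n generalizing α with
  | zero => exact fun _ _ h => (add_lt_add_iff_left α).2 h
  | succ n ih =>
    obtain ⟨z, hz, h⟩ := ordOp_add_two_eq n α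
    rw [h]
    exact ordOpAux_strictMono (hz.trans_lt hα) hα (fun _ _ => lt_ordOp_add_one @ih) @ih

/-- For every `n ≥ 1` and every ordinal `α > 1`, the function `β ↦ ⟨α, β⟩ₙ` is
strictly increasing. -/
theorem ordOp_strictMono (n : ℕ) (hn : 1 ≤ n) (α : Ordinal) (hα : 1 < α) :
    ∀ β γ : Ordinal, β < γ → ordOp n α β < ordOp n α γ := by
  obtain ⟨m, rfl⟩ := Nat.exists_eq_add_of_le' hn
  exact fun _ _ h => ordOp_add_one_strictMono m hα h
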